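/- arXiv:2210.11634 — 4 statements merged into one kernel-verified Lean document; each statement's English description precedes it below -/
import Mathlib

section
/- Let v_i, c_i, v_j, c_j be positive reals with v_i/c_i^2 > v_j/c_j^2 and v_i/c_i < v_j/c_j. If there exists C_o > 0 with v_i/(c_i(c_i + C_o)) < v_j/(c_j(c_j + C_o)), then for every C > C_o it holds that v_i/(c_i(c_i + C)) < v_j/(c_j(c_j + C)). -/
/-!
Cross-multiplying, `φ(A_i, C) < φ(A_j, C)` says that the affine function
`C ↦ (v_j c_i² - v_i c_j²) + C (v_j c_i - v_i c_j)` is positive. Its slope is positive because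
`v_i / c_i < v_j / c_j`, so once it is positive at `C_o` it stays positive for all `C > C_o`.
-/

/-- The relative distance factor `φ(A, C) = v / (c (c + C))` of an airplane with speed `v` and
fuel consumption rate `c`. -/
noncomputable def relDistFactor (v c C : ℝ) : ℝ := v / (c * (c + C))

theorem relDistFactor_lt_relDistFactor_iff {vi ci vj cj C : ℝ} (hci : 0 < ci) (hcj : 0 < cj)
    (hciC : 0 < ci + C) (hcjC : 0 < cj + C) :
    relDistFactor vi ci C < relDistFactor vj cj C ↔
      0 < (vj * ci ^ 2 - vi * cj ^ 2) + C * (vj * ci - vi * cj) := by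
  unfold relDistFactor
  rw [div_lt_div_iff₀ (by positivity) (by positivity), ← sub_pos]
  ring_nf

theorem relDistFactor_lt_relDistFactor_of_lt {vi ci vj cj Co C : ℝ} (hci : 0 < ci) (hcj : 0 < cj)
    (hCo : 0 < Co) (hC : Co < C) (hslope : vi / ci < vj / cj)
    (hCo_lt : relDistFactor vi ci Co < relDistFactor vj cj Co) :
    relDistFactor vi ci C < relDistFactor vj cj C := by
  have hCpos : 0 < C := hCo.trans hC
  rw [relDistFactor_lt_relDistFactor_iff hci hcj (by positivity) (by positivity)] at hCo_lt ⊢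
  rw [div_lt_div_iff₀ hci hcj] at hslope
  have hgrowth : 0 < (C - Co) * (vj * ci - vi * cj) :=
    mul_pos (sub_pos.2 hC) (by linarith)
  linarith

theorem stmt_2_general (vi ci vj cj : ℝ) (hci : 0 < ci) (hcj : 0 < cj)
    (h2 : vi / ci < vj / cj)
    (Co : ℝ) (hCo : 0 < Co)
    (h3 : vi / (ci * (ci + Co)) < vj / (cj * (cj + Co))) :
    ∀ C : ℝ, Co < C → vi / (ci * (ci + C)) < vj / (cj * (cj + C)) :=
  fun _ hC => relDistFactor_lt_relDistFactor_of_lt hci hcj hCo hC h2 h3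

theorem stmt_2 (vi ci vj cj : ℝ) (hvi : 0 < vi) (hci : 0 < ci) (hvj : 0 < vj) (hcj : 0 < cj)
    (h1 : vi / ci ^ 2 > vj / cj ^ 2) (h2 : vi / ci < vj / cj)
    (Co : ℝ) (hCo : 0 < Co)
    (h3 : vi / (ci * (ci + Co)) < vj / (cj * (cj + Co))) :
    ∀ C : ℝ, Co < C → vi / (ci * (ci + C)) < vj / (cj * (cj + C)) :=
  stmt_2_general vi ci vj cj hci hcj h2 Co hCo h3
end

section
/- For positive reals v_i, c_i, v_j, c_j with v_i/c_i^2 ≥ v_j/c_j^2 and v_i/c_i ≥ v_j/c_j, the inequality v_i/(c_i(c_i + C)) ≥ v_j/(c_j(c_j + C)) holds for every C ≥ 0. -/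
theorem stmt_3_general (vi ci vj cj : ℝ) (hci : 0 < ci) (hcj : 0 < cj)
    (h1 : vi / ci ^ 2 ≥ vj / cj ^ 2) (h2 : vi / ci ≥ vj / cj) :
    ∀ C : ℝ, 0 ≤ C → vi / (ci * (ci + C)) ≥ vj / (cj * (cj + C)) := by
  intro C hC
  rw [ge_iff_le, div_le_div_iff₀ (by positivity) (by positivity)] at h1 h2 ⊢
  calc vj * (ci * (ci + C)) = vj * ci ^ 2 + C * (vj * ci) := by ring
    _ ≤ vi * cj ^ 2 + C * (vi * cj) := by gcongr
    _ = vi * (cj * (cj + C)) := by ring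

theorem stmt_3 (vi ci vj cj : ℝ) (hvi : 0 < vi) (hci : 0 < ci) (hvj : 0 < vj) (hcj : 0 < cj)
    (h1 : vi / ci ^ 2 ≥ vj / cj ^ 2) (h2 : vi / ci ≥ vj / cj) :
    ∀ C : ℝ, 0 ≤ C → vi / (ci * (ci + C)) ≥ vj / (cj * (cj + C)) :=
  stmt_3_general vi ci vj cj hci hcj h1 h2
end

section
/- Let v_i, c_i, v_j, c_j and C_o be positive reals. Then v_j/(c_j + c_i + C_o) + v_i/(c_i + C_o) > v_i/(c_i + c_j + C_o) + v_j/(c_j + C_o) if and only if v_i/(c_i(c_i + C_o)) > v_j/(c_j(c_j + C_o)). -/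
/-! Swapping the two airplanes changes the total distance by
`ci cj / (ci + cj + Co) * (φᵢ - φⱼ)` with `φ = v / (c (c + Co))`, and the prefactor is positive. -/

theorem swap_distance_sub_eq {K : Type*} [Field K] (vi ci vj cj Co : K) (hci : ci ≠ 0)
    (hcj : cj ≠ 0) (hi : ci + Co ≠ 0) (hj : cj + Co ≠ 0) (hij : ci + cj + Co ≠ 0) :
    vj / (cj + ci + Co) + vi / (ci + Co) - (vi / (ci + cj + Co) + vj / (cj + Co))
      = ci * cj / (ci + cj + Co) * (vi / (ci * (ci + Co)) - vj / (cj * (cj + Co))) := by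
  rw [add_comm cj ci]
  field_simp
  ring

theorem stmt_16_general (vi ci vj cj Co : ℝ) (hci : 0 < ci)
    (hcj : 0 < cj) (hCo : 0 < Co) :
    (vj / (cj + ci + Co) + vi / (ci + Co) > vi / (ci + cj + Co) + vj / (cj + Co))
      ↔ (vi / (ci * (ci + Co)) > vj / (cj * (cj + Co))) := by
  have hi : 0 < ci + Co := by positivity
  have hj : 0 < cj + Co := by positivity
  have hij : 0 < ci + cj + Co := by positivity
  rw [gt_iff_lt, ← sub_pos,
    swap_distance_sub_eq vi ci vj cj Co hci.ne' hcj.ne' hi.ne' hj.ne' hij.ne',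
    mul_pos_iff_of_pos_left (by positivity), sub_pos]

theorem stmt_16 (vi ci vj cj Co : ℝ) (hvi : 0 < vi) (hci : 0 < ci) (hvj : 0 < vj)
    (hcj : 0 < cj) (hCo : 0 < Co) :
    (vj / (cj + ci + Co) + vi / (ci + Co) > vi / (ci + cj + Co) + vj / (cj + Co))
      ↔ (vi / (ci * (ci + Co)) > vj / (cj * (cj + Co))) :=
  stmt_16_general vi ci vj cj Co hci hcj hCo
end

section
/- Let v_1, c_1, v_2, c_2, v_3, c_3 be positive reals and suppose v_4/(c_4(c_4 + c_1 + c_3)) > v_2/(c_2(c_2 + c_1 + c_3)) and v_2/(c_2(2c_2 + c_3)) > v_1/(c_1(c_1 + c_2 + c_3)), where additionally v_4/c_4^2 < v_2/c_2^2, v_4/c_4 > v_2/c_2, and c_1 + c_3 < c_2 + c_3 (i.e. c_1 < c_2). Then v_4/(c_4(c_4 + c_2 + c_3)) > v_1/(c_1(c_1 + c_2 + c_3)). -/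
/-- The paper's `φ(A, C)` for an airplane `A` of value `v` and cost `c`. -/
noncomputable def phi (v c C : ℝ) : ℝ := v / (c * (c + C))

/-- Cleared of denominators, `phi v c C < phi w d C` reads `v d² - w c² < (w c - v d) C`,
whose right side grows with `C` when `v / c < w / d`. -/
theorem phi_lt_phi_of_le {v c w d C₀ C : ℝ} (hc : 0 < c) (hd : 0 < d) (hC₀ : 0 ≤ C₀)
    (hC : C₀ ≤ C) (hvw : v / c < w / d) (h : phi v c C₀ < phi w d C₀) :
    phi v c C < phi w d C := by
  unfold phi at *
  rw [div_lt_div_iff₀ hc hd] at hvw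
  have hc' : ∀ {C'}, C₀ ≤ C' → 0 < c * (c + C') := fun h' => mul_pos hc (by linarith)
  have hd' : ∀ {C'}, C₀ ≤ C' → 0 < d * (d + C') := fun h' => mul_pos hd (by linarith)
  rw [div_lt_div_iff₀ (hc' le_rfl) (hd' le_rfl)] at h
  rw [div_lt_div_iff₀ (hc' hC) (hd' hC)]
  linarith [mul_nonneg (sub_nonneg.2 hvw.le) (sub_nonneg.2 hC)]

theorem stmt_18_general (v1 c1 v2 c2 c3 v4 c4 : ℝ)
    (hc1 : 0 < c1) (hc2 : 0 < c2)
    (hc3 : 0 < c3) (hc4 : 0 < c4)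
    (h1 : v4 / (c4 * (c4 + c1 + c3)) > v2 / (c2 * (c2 + c1 + c3)))
    (h2 : v2 / (c2 * (2 * c2 + c3)) > v1 / (c1 * (c1 + c2 + c3)))
    (h4 : v4 / c4 > v2 / c2)
    (h5 : c1 + c3 < c2 + c3) :
    v4 / (c4 * (c4 + c2 + c3)) > v1 / (c1 * (c1 + c2 + c3)) := by
  have hC₀ : phi v2 c2 (c1 + c3) < phi v4 c4 (c1 + c3) := by
    simpa only [phi, add_assoc] using h1
  have hC : phi v2 c2 (c2 + c3) < phi v4 c4 (c2 + c3) :=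
    phi_lt_phi_of_le hc2 hc4 (by positivity) h5.le h4 hC₀
  have h2' : v1 / (c1 * (c1 + c2 + c3)) < phi v2 c2 (c2 + c3) := by
    simpa only [phi, two_mul, add_assoc] using h2
  simpa only [phi, add_assoc] using h2'.trans hC

theorem stmt_18 (v1 c1 v2 c2 v3 c3 v4 c4 : ℝ)
    (hv1 : 0 < v1) (hc1 : 0 < c1) (hv2 : 0 < v2) (hc2 : 0 < c2)
    (hv3 : 0 < v3) (hc3 : 0 < c3) (hv4 : 0 < v4) (hc4 : 0 < c4)
    (h1 : v4 / (c4 * (c4 + c1 + c3)) > v2 / (c2 * (c2 + c1 + c3)))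
    (h2 : v2 / (c2 * (2 * c2 + c3)) > v1 / (c1 * (c1 + c2 + c3)))
    (h3 : v4 / c4 ^ 2 < v2 / c2 ^ 2) (h4 : v4 / c4 > v2 / c2)
    (h5 : c1 + c3 < c2 + c3) :
    v4 / (c4 * (c4 + c2 + c3)) > v1 / (c1 * (c1 + c2 + c3)) :=
  stmt_18_general v1 c1 v2 c2 c3 v4 c4 hc1 hc2 hc3 hc4 h1 h2 h4 h5
end
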